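/- arXiv:1902.06732 — 7 statements merged into one kernel-verified Lean document; each statement's English description precedes it below -/
import Mathlib

section
/- Let θ ∈ (0, π) and let D_θ = {z ∈ ℂ \ {0,1} : the angle ∠0z1 at vertex z in the triangle with vertices 0, z, 1 is greater than π − θ}. Then for any 0 < t < 1 and any z ∈ D_θ with z ∉ (−∞, 0], the principal power z^t also lies in D_θ. -/
/-!
Write `z = r e^{iφ}`. The condition `∠0z1 > π - θ` says that the exterior angle of the triangle
`0, z, 1` at `z` is less than `θ`, which in polar coordinates reads `r sin θ < sin (θ - |φ|)`.
Since `z ^ t = r ^ t e^{itφ}`, it remains to see that `r sin θ < sin (θ - φ)` implies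
`r ^ t sin θ < sin (θ - t φ)`. Writing `r ^ t sin θ = (r sin θ) ^ t (sin θ) ^ (1 - t)`, this
follows from weighted AM-GM and the concavity of `sin` on `[0, π]`:
`(sin (θ - φ)) ^ t (sin θ) ^ (1 - t) ≤ t sin (θ - φ) + (1 - t) sin θ ≤ sin (θ - t φ)`.
-/

open Real Set

lemma Real.sin_pos_iff_of_mem_Ioo {x : ℝ} (hx : x ∈ Ioo (-π) π) : 0 < sin x ↔ 0 < x := by
  refine ⟨fun h => ?_, fun h => sin_pos_of_pos_of_lt_pi h hx.2⟩
  by_contra! hx0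
  exact (sin_nonpos_of_nonpos_of_neg_pi_le hx0 hx.1.le).not_gt h

namespace Complex

lemma norm_mul_cos_abs_arg (z : ℂ) : ‖z‖ * Real.cos |arg z| = z.re := by
  rw [Real.cos_abs, norm_mul_cos_arg]

lemma norm_mul_sin_abs_arg (z : ℂ) : ‖z‖ * Real.sin |arg z| = |z.im| := by
  rcases le_total 0 (arg z) with h | h
  · rw [abs_of_nonneg h, abs_of_nonneg (arg_nonneg_iff.1 h), norm_mul_sin_arg]
  · have hsin : Real.sin (arg z) ≤ 0 :=
      Real.sin_nonpos_of_nonpos_of_neg_pi_le h (neg_pi_lt_arg z).le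
    rw [abs_of_nonpos h, Real.sin_neg, ← norm_mul_sin_arg,
      abs_of_nonpos (mul_nonpos_of_nonneg_of_nonpos (norm_nonneg z) hsin), mul_neg]

lemma arg_cpow_ofReal {z : ℂ} (hz : z ≠ 0) {t : ℝ} (ht : t ∈ Icc 0 1) :
    arg (z ^ (t : ℂ)) = t * arg z := by
  have him : (log z * t).im = t * arg z := by simp [log_im, mul_comm]
  have h1 := neg_pi_lt_arg z
  have h2 := arg_le_pi z
  rw [cpow_def_of_ne_zero hz, arg_exp, him, toIocMod_eq_self]
  constructor <;> nlinarith [ht.1, ht.2]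

lemma norm_mul_sin_sub_abs_arg (θ : ℝ) (v : ℂ) :
    ‖v‖ * Real.sin (θ - |arg v|) = Real.sin θ * v.re - Real.cos θ * |v.im| := by
  rw [Real.sin_sub, ← norm_mul_cos_abs_arg, ← norm_mul_sin_abs_arg]; ring

lemma abs_arg_lt_iff {θ : ℝ} (hθ : θ ∈ Ioo 0 π) {v : ℂ} (hv : v ≠ 0) :
    |arg v| < θ ↔ Real.cos θ * |v.im| < Real.sin θ * v.re := by
  rw [← sub_pos (a := Real.sin θ * v.re), ← norm_mul_sin_sub_abs_arg,
    mul_pos_iff_of_pos_left (norm_pos_iff.2 hv), Real.sin_pos_iff_of_mem_Ioo, sub_pos]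
  constructor <;> linarith [abs_nonneg (arg v), abs_arg_le_pi v, hθ.1, hθ.2]

theorem pi_sub_lt_angle_zero_one_iff {θ : ℝ} (hθ : θ ∈ Ioo 0 π) {z : ℂ} (hz0 : z ≠ 0)
    (hz1 : z ≠ 1) :
    π - θ < EuclideanGeometry.angle 0 z 1 ↔ ‖z‖ * Real.sin θ < Real.sin (θ - |arg z|) := by
  have h1z : 1 - z ≠ 0 := sub_ne_zero.2 hz1.symm
  have hangle : EuclideanGeometry.angle 0 z 1 = π - |arg (z / (1 - z))| := by
    rw [EuclideanGeometry.angle, vsub_eq_sub, vsub_eq_sub, zero_sub,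
      InnerProductGeometry.angle_neg_left, angle_eq_abs_arg hz0 h1z]
  have hN : 0 < normSq (1 - z) := normSq_pos.2 h1z
  have hre : (z / (1 - z)).re = (z.re - normSq z) / normSq (1 - z) := by
    simp only [div_re, sub_re, one_re, sub_im, one_im, normSq_apply]; ring
  have him : (z / (1 - z)).im = z.im / normSq (1 - z) := by
    simp only [div_im, sub_re, one_re, sub_im, one_im]; ring
  rw [hangle, sub_lt_sub_iff_left, abs_arg_lt_iff hθ (div_ne_zero hz0 h1z), hre, him, abs_div,
    abs_of_pos hN, mul_div_assoc', mul_div_assoc', div_lt_div_iff_of_pos_right hN,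
    normSq_eq_norm_sq, ← mul_lt_mul_iff_right₀ (norm_pos_iff.2 hz0) (b := ‖z‖ * _),
    norm_mul_sin_sub_abs_arg]
  constructor <;> intro h <;> linarith

end Complex

theorem rpow_mul_sin_lt_sin_sub_mul {θ φ r t : ℝ} (hθ : θ ∈ Ioo 0 π) (hφ : φ ∈ Icc 0 π)
    (hr : 0 ≤ r) (ht : t ∈ Ioc 0 1) (h : r * sin θ < sin (θ - φ)) :
    r ^ t * sin θ < sin (θ - t * φ) := by
  have hsinθ : 0 < sin θ := sin_pos_of_pos_of_lt_pi hθ.1 hθ.2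
  have hrsin : 0 ≤ r * sin θ := mul_nonneg hr hsinθ.le
  have hφθ : φ ≤ θ := by
    by_contra! hθφ
    linarith [sin_nonpos_of_nonpos_of_neg_pi_le (by linarith : θ - φ ≤ 0)
      (by linarith [hφ.2, hθ.1] : -π ≤ θ - φ)]
  have hconc := strictConcaveOn_sin_Icc.concaveOn.2 (⟨by linarith, by linarith [hθ.2, hφ.1]⟩ :
    θ - φ ∈ Icc 0 π) (⟨hθ.1.le, hθ.2.le⟩ : θ ∈ Icc 0 π) ht.1.le (sub_nonneg.2 ht.2)
    (add_sub_cancel t 1)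
  calc r ^ t * sin θ = (r * sin θ) ^ t * sin θ ^ (1 - t) := by
        rw [mul_rpow hr hsinθ.le, mul_assoc, ← rpow_add hsinθ, add_sub_cancel, rpow_one]
    _ < sin (θ - φ) ^ t * sin θ ^ (1 - t) :=
        mul_lt_mul_of_pos_right (rpow_lt_rpow hrsin h ht.1) (rpow_pos_of_pos hsinθ _)
    _ ≤ t * sin (θ - φ) + (1 - t) * sin θ :=
        geom_mean_le_arith_mean2_weighted ht.1.le (sub_nonneg.2 ht.2) (hrsin.trans h.le)
          hsinθ.le (add_sub_cancel t 1)
    _ ≤ sin (θ - t * φ) := by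
        simpa only [smul_eq_mul, show t * (θ - φ) + (1 - t) * θ = θ - t * φ by ring] using hconc

theorem stmt0_general (θ : ℝ) (hθ : θ ∈ Set.Ioo 0 π) (t : ℝ) (ht : 0 < t) (ht1 : t < 1)
    (z : ℂ) (hz0 : z ≠ 0) (hz1 : z ≠ 1)
    (hzD : π - θ < EuclideanGeometry.angle (0 : ℂ) z 1) :
    z ^ (t : ℂ) ≠ 0 ∧ z ^ (t : ℂ) ≠ 1 ∧
      π - θ < EuclideanGeometry.angle (0 : ℂ) (z ^ (t : ℂ)) 1 := by
  have hw0 : z ^ (t : ℂ) ≠ 0 := Complex.cpow_ne_zero_iff.2 (Or.inl hz0)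
  have harg : |Complex.arg (z ^ (t : ℂ))| = t * |Complex.arg z| := by
    rw [Complex.arg_cpow_ofReal hz0 ⟨ht.le, ht1.le⟩, abs_mul, abs_of_pos ht]
  have hw : ‖z ^ (t : ℂ)‖ * sin θ < sin (θ - |Complex.arg (z ^ (t : ℂ))|) := by
    rw [Complex.norm_cpow_real, harg]
    exact rpow_mul_sin_lt_sin_sub_mul hθ ⟨abs_nonneg _, Complex.abs_arg_le_pi z⟩
      (norm_nonneg z) ⟨ht, ht1.le⟩ ((Complex.pi_sub_lt_angle_zero_one_iff hθ hz0 hz1).1 hzD)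
  have hw1 : z ^ (t : ℂ) ≠ 1 := by
    intro h
    simp [h] at hw
  exact ⟨hw0, hw1, (Complex.pi_sub_lt_angle_zero_one_iff hθ hw0 hw1).2 hw⟩

theorem stmt0 (θ : ℝ) (hθ : θ ∈ Set.Ioo 0 π) (t : ℝ) (ht : 0 < t) (ht1 : t < 1)
    (z : ℂ) (hz0 : z ≠ 0) (hz1 : z ≠ 1)
    (hzD : π - θ < EuclideanGeometry.angle (0 : ℂ) z 1)
    (hzneg : ¬ (z.im = 0 ∧ z.re ≤ 0)) :
    z ^ (t : ℂ) ≠ 0 ∧ z ^ (t : ℂ) ≠ 1 ∧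
      π - θ < EuclideanGeometry.angle (0 : ℂ) (z ^ (t : ℂ)) 1 :=
  stmt0_general θ hθ t ht ht1 z hz0 hz1 hzD
end

section
/- Let q ≥ 2, let D_1, …, D_{q−1} and L_1, …, L_{q−1} be complex numbers with all D_i ≠ 0, and let A be the q×q matrix whose first row is zero, whose rows i+1 (for 1 ≤ i ≤ q−2) have entry −L_i/D_i in column 2 and entry 1/D_i in column i+2, and whose last row has entry 1/D_{q−1} in column 1 and entry −L_{q−1}/D_{q−1} in column 2 (all other entries zero). Then det(I − ρA) = 1 + (L_1/D_1)ρ + (L_2/(D_1 D_2))ρ² + … + (L_{q−1}/(D_1 D_2 ⋯ D_{q−1}))ρ^{q−1}. -/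
open Finset Matrix

noncomputable def NN (ρ : ℂ) (D L : ℕ → ℂ) (m : ℕ) : Matrix (Fin m) (Fin m) ℂ :=
  fun i j => (if i = j then 1 else 0)
    + (if (j : ℕ) = 0 then ρ * L ((i : ℕ) + 1) / D ((i : ℕ) + 1) else 0)
    + (if (j : ℕ) = (i : ℕ) + 1 then -ρ / D ((i : ℕ) + 1) else 0)

theorem detNN (ρ : ℂ) (D L : ℕ → ℂ) : ∀ m : ℕ, 1 ≤ m →
    (NN ρ D L m).det = 1 + ∑ n ∈ Finset.Icc 1 m, (L n / ∏ k ∈ Finset.Icc 1 n, D k) * ρ ^ n := by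
  intro m
  induction m with
  | zero => omega
  | succ k ih =>
    intro _
    rcases Nat.eq_zero_or_pos k with hk | hk
    · subst hk
      rw [show (NN ρ D L 1).det = NN ρ D L 1 0 0 from Matrix.det_fin_one _]
      simp [NN, div_eq_mul_inv]
      ring
    · have h0last : (0 : Fin (k+1)) ≠ Fin.last k := by
        simp [Fin.ext_iff, Fin.val_last]; omega
      rw [Matrix.det_succ_row (NN ρ D L (k+1)) (Fin.last k)]
      set f : Fin (k+1) → ℂ := fun j =>
        (-1) ^ ((Fin.last k : ℕ) + (j : ℕ)) * NN ρ D L (k+1) (Fin.last k) j *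
          ((NN ρ D L (k+1)).submatrix (Fin.last k).succAbove j.succAbove).det with hf
      have hsum : ∑ j : Fin (k+1), f j = f 0 + f (Fin.last k) := by
        rw [← Finset.sum_subset (Finset.subset_univ ({0, Fin.last k} : Finset (Fin (k+1))))]
        · rw [Finset.sum_pair h0last]
        · intro j _ hj
          simp only [Finset.mem_insert, Finset.mem_singleton, not_or] at hj
          have h1 : (j : ℕ) ≠ 0 := fun h => hj.1 (Fin.ext h)
          have h2 : (j : ℕ) ≠ k := fun h => hj.2 (Fin.ext (by simp [Fin.val_last, h]))
          have h3 : (j : ℕ) ≤ k := Nat.lt_succ_iff.mp j.isLt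
          have : NN ρ D L (k+1) (Fin.last k) j = 0 := by
            simp only [NN, Fin.ext_iff, Fin.val_last]
            rw [if_neg (by omega), if_neg (by omega), if_neg (by omega)]
            ring
          rw [hf]
          simp [this]
      rw [hsum]
      -- value of f (last)
      have hNlast : NN ρ D L (k+1) (Fin.last k) (Fin.last k) = 1 := by
        simp [NN, Fin.val_last]
        omega
      have hsubll : (NN ρ D L (k+1)).submatrix (Fin.last k).succAbove (Fin.last k).succAbove
          = NN ρ D L k := by
        ext i j
        simp [Fin.succAbove_last, NN, Fin.ext_iff]
      have hneg : ((-1:ℂ))^k * ((-1:ℂ))^k = 1 := by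
        rw [← pow_add, ← two_mul, pow_mul]; norm_num
      have hflast : f (Fin.last k) = (NN ρ D L k).det := by
        rw [hf]; simp only [hNlast, hsubll, Fin.val_last, pow_add, hneg, one_mul, mul_one]
      -- value of f 0
      have hN0 : NN ρ D L (k+1) (Fin.last k) 0 = ρ * L (k+1) / D (k+1) := by
        simp [NN, Fin.val_last, Fin.ext_iff]
        omega
      have hT : ((NN ρ D L (k+1)).submatrix (Fin.last k).succAbove (0 : Fin (k+1)).succAbove).det
          = ∏ i : Fin k, (-ρ / D ((i : ℕ) + 1)) := by
        rw [Matrix.det_of_lowerTriangular]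
        · apply Finset.prod_congr rfl
          intro i _
          simp [Fin.succAbove_last, Fin.succAbove_zero, NN, Fin.ext_iff]
        · intro i j hij
          have hij' : (i : ℕ) < (j : ℕ) := hij
          simp [Fin.succAbove_last, Fin.succAbove_zero, NN, Fin.ext_iff]
          rw [if_neg (by omega), if_neg (by omega)]
          ring
      have hprod : ∏ i : Fin k, (-ρ / D ((i : ℕ) + 1))
          = (-ρ) ^ k * (∏ n ∈ Finset.Icc 1 k, D n)⁻¹ := by
        have hconv : ∏ i : Fin k, (D ((i : ℕ) + 1))⁻¹ = ∏ n ∈ Finset.Icc 1 k, (D n)⁻¹ := by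
          rw [Fin.prod_univ_eq_prod_range (fun i => (D (i + 1))⁻¹)]
          rw [show Finset.Icc 1 k = Finset.Ico 1 (k+1) by rfl, Finset.prod_Ico_eq_prod_range]
          simp [add_comm]
        simp only [div_eq_mul_inv]
        rw [Finset.prod_mul_distrib, Finset.prod_const, hconv, ← Finset.prod_inv_distrib]
        simp
      have hf0 : f 0 = (L (k+1) / ∏ n ∈ Finset.Icc 1 (k+1), D n) * ρ ^ (k+1) := by
        rw [hf]
        simp only [hN0, hT, hprod, Fin.val_last, Fin.val_zero, add_zero]
        rw [Finset.prod_Icc_succ_top (by omega : 1 ≤ k + 1)]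
        rw [neg_pow ρ k, div_eq_mul_inv, div_eq_mul_inv, _root_.mul_inv_rev]
        linear_combination (ρ * L (k+1) * (D (k+1))⁻¹ * ρ^k * (∏ n ∈ Finset.Icc 1 k, D n)⁻¹) * hneg
      rw [hf0, hflast, ih hk, Finset.sum_Icc_succ_top (by omega : 1 ≤ k + 1)]
      ring

theorem stmt3 (q : ℕ) (hq : 2 ≤ q) (D L : ℕ → ℂ)
    (hD : ∀ i, 1 ≤ i → i ≤ q - 1 → D i ≠ 0)
    (A : Matrix (Fin q) (Fin q) ℂ)
    (hA : ∀ i j : Fin q,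
      A i j = if (i : ℕ) = 0 then 0
        else if (i : ℕ) = q - 1 then
          (if (j : ℕ) = 0 then 1 / D (q - 1)
           else if (j : ℕ) = 1 then -L (q - 1) / D (q - 1) else 0)
        else
          (if (j : ℕ) = 1 then -L (i : ℕ) / D (i : ℕ)
           else if (j : ℕ) = (i : ℕ) + 1 then 1 / D (i : ℕ) else 0)) :
    ∀ ρ : ℂ, (1 - ρ • A).det =
      1 + ∑ n ∈ Finset.Icc 1 (q - 1), (L n / ∏ k ∈ Finset.Icc 1 n, D k) * ρ ^ n := by
  intro ρ
  obtain ⟨m, rfl⟩ : ∃ m, q = m + 1 := ⟨q - 1, by omega⟩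
  have hm : 1 ≤ m := by omega
  have hsub : ((1 - ρ • A).submatrix Fin.succ Fin.succ) = NN ρ D L m := by
    ext i j
    simp only [Matrix.submatrix_apply, Matrix.sub_apply, Matrix.smul_apply, hA, NN,
      Matrix.one_apply, Fin.val_succ, Fin.succ_inj, smul_eq_mul, Nat.add_sub_cancel,
      Nat.succ_ne_zero, if_false, Nat.add_right_cancel_iff]
    have hjm : (j : ℕ) < m := j.isLt
    have him : (i : ℕ) < m := i.isLt
    split_ifs <;> (try omega) <;>
      (try simp only [show m = (i : ℕ) + 1 from by omega]) <;> ring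
  rw [Matrix.det_succ_row_zero]
  rw [Finset.sum_eq_single (0 : Fin (m + 1))]
  · have h0 : (1 - ρ • A) 0 0 = 1 := by
      simp [Matrix.sub_apply, Matrix.smul_apply, Matrix.one_apply, hA]
    rw [h0, Fin.succAbove_zero, hsub, detNN ρ D L m hm]
    simp
  · intro j _ hj
    have : (1 - ρ • A) 0 j = 0 := by
      have : ((0 : Fin (m + 1)) : ℕ) = 0 := rfl
      simp [Matrix.sub_apply, Matrix.smul_apply, Matrix.one_apply, hA, hj.symm, this]
    simp [this]
  · intro h
    exact absurd (Finset.mem_univ _) h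
end

section
/- Let ℓ ≥ 1 and x_0 > 0, and let Φ(re^{iθ}) = r^ℓ e^{iℓθ} be the conformal map from the sector S = {re^{iθ} : r > 0, |θ| < π/(2ℓ)} onto the right half-plane. Let D_*(J) denote the Euclidean disk with the bounded interval J ⊂ ℝ as a diameter. Then Φ^{-1}(D_*((0, x_0^ℓ))) ⊂ D_*((0, x_0)). -/
/-!
In polar coordinates the disk with diameter `(0, a)` is `r < a cos θ`. For `z = r e^{iθ}` in the
sector, `z^ℓ = r^ℓ e^{iℓθ}`, so the hypothesis reads `r^ℓ < x₀^ℓ cos (ℓθ)`. Concavity of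
`log ∘ cos` on `(-π/2, π/2)` together with `log cos 0 = 0` gives `cos (ℓθ) ≤ (cos θ)^ℓ`, hence
`r < x₀ cos θ`.
-/

open Real

theorem Complex.mem_ball_half_iff {a : ℝ} (ha : 0 ≤ a) (z : ℂ) :
    z ∈ Metric.ball ((a / 2 : ℝ) : ℂ) (a / 2) ↔ ‖z‖ ^ 2 < a * z.re := by
  rw [Metric.mem_ball, Complex.dist_eq,
    ← pow_lt_pow_iff_left₀ (norm_nonneg _) (by positivity) two_ne_zero,
    Complex.sq_norm, Complex.sq_norm, Complex.normSq_apply, Complex.normSq_apply]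
  simp only [Complex.sub_re, Complex.sub_im, Complex.ofReal_re, Complex.ofReal_im, sub_zero]
  constructor <;> intro h <;> nlinarith

theorem Real.concaveOn_log_cos : ConcaveOn ℝ (Set.Ioo (-(π / 2)) (π / 2)) (log ∘ cos) := by
  have hpos : cos '' Set.Ioo (-(π / 2)) (π / 2) ⊆ Set.Ioi 0 := by
    rintro _ ⟨x, hx, rfl⟩
    exact cos_pos_of_mem_Ioo hx
  refine (strictConcaveOn_log_Ioi.concaveOn.subset hpos ?_).comp
    (strictConcaveOn_cos_Icc.concaveOn.subset Set.Ioo_subset_Icc_self (convex_Ioo _ _))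
    (strictMonoOn_log.monotoneOn.mono hpos)
  exact (isPreconnected_Ioo.image _ continuous_cos.continuousOn).convex

theorem Real.cos_mul_le_cos_rpow {ℓ θ : ℝ} (hℓ : 1 ≤ ℓ) (hθ : ℓ * |θ| < π / 2) :
    cos (ℓ * θ) ≤ cos θ ^ ℓ := by
  have hℓ0 : 0 < ℓ := zero_lt_one.trans_le hℓ
  have hℓθ : ℓ * θ ∈ Set.Ioo (-(π / 2)) (π / 2) := by
    rwa [Set.mem_Ioo, ← abs_lt, abs_mul, abs_of_pos hℓ0]
  have hθ : θ ∈ Set.Ioo (-(π / 2)) (π / 2) :=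
    abs_lt.1 ((le_mul_of_one_le_left (abs_nonneg θ) hℓ).trans_lt hθ)
  have h0 : (0 : ℝ) ∈ Set.Ioo (-(π / 2)) (π / 2) := by
    constructor <;> linarith [pi_pos]
  -- θ is the convex combination (1/ℓ)·(ℓθ) + (1 - 1/ℓ)·0
  have hconc := concaveOn_log_cos.2 hℓθ h0 (inv_pos.2 hℓ0).le
    (sub_nonneg.2 (inv_le_one_of_one_le₀ hℓ)) (add_sub_cancel _ _)
  simp only [smul_eq_mul, mul_zero, add_zero, Function.comp_apply, cos_zero, log_one,
    inv_mul_cancel_left₀ hℓ0.ne', inv_mul_le_iff₀ hℓ0] at hconc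
  have hcosθ : 0 < cos θ := cos_pos_of_mem_Ioo hθ
  rwa [← log_le_log_iff (cos_pos_of_mem_Ioo hℓθ) (rpow_pos_of_pos hcosθ ℓ), log_rpow hcosθ]

theorem stmt6 (ℓ : ℝ) (hℓ : 1 ≤ ℓ) (x₀ : ℝ) (hx₀ : 0 < x₀) (z : ℂ) (hz : z ≠ 0)
    (harg : |Complex.arg z| < π / (2 * ℓ))
    (hmem : z ^ (ℓ : ℂ) ∈ Metric.ball ((x₀ ^ ℓ / 2 : ℝ) : ℂ) (x₀ ^ ℓ / 2)) :
    z ∈ Metric.ball ((x₀ / 2 : ℝ) : ℂ) (x₀ / 2) := by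
  have hℓ0 : 0 < ℓ := zero_lt_one.trans_le hℓ
  have hr : 0 < ‖z‖ := norm_pos_iff.2 hz
  have hθ : ℓ * |z.arg| < π / 2 := by
    rwa [lt_div_iff₀ (by positivity), mul_comm 2, ← mul_assoc, ← lt_div_iff₀ two_pos,
      mul_comm] at harg
  have hcos : 0 ≤ cos z.arg :=
    cos_nonneg_of_mem_Icc (abs_le.1 ((le_mul_of_one_le_left (abs_nonneg _) hℓ).trans hθ.le))
  rw [Complex.mem_ball_half_iff (by positivity), Complex.norm_cpow_real, Complex.cpow_ofReal_re,
    sq, mul_left_comm, mul_comm z.arg, mul_lt_mul_iff_right₀ (rpow_pos_of_pos hr ℓ)] at hmem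
  have hpow : ‖z‖ ^ ℓ < (x₀ * cos z.arg) ^ ℓ := by
    rw [mul_rpow hx₀.le hcos]
    exact hmem.trans_le (mul_le_mul_of_nonneg_left (cos_mul_le_cos_rpow hℓ hθ) (by positivity))
  rw [rpow_lt_rpow_iff hr.le (by positivity) hℓ0] at hpow
  rw [Complex.mem_ball_half_iff hx₀.le, ← Complex.norm_mul_cos_arg, sq, mul_left_comm]
  exact mul_lt_mul_of_pos_left hpow hr
end

section
/- For every ε > 0 there exists δ > 0 such that the following holds. Let θ ∈ (0, π/2], let z = re^{iα} with r > 0, α ∈ (0, θ), write β = ∠01z (the angle at vertex 1 of the triangle 0,1,z), and suppose α + β ≤ θ and β < δθ. Then for every 0 < t < 1, the angle β' = ∠01z^t satisfies β' < εθ. -/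
/-
Write `∠ 0 1 w = arctan (Im w / (1 - Re w))`. For `w = ρ e^{iφ}` with `ρ < 1` this gives
`∠ 0 1 w ≤ ρ φ / (1 - ρ)`, and for `w = z^t = r^t e^{itα}` the elementary inequality
`s e^{-s} ≤ 1 - e^{-s}` (with `s = -t log r`) turns this into the `t`-free bound
`∠ 0 1 z^t ≤ α / (-log r)`. On the other hand, a small angle `β = ∠ 0 1 z` forces `r` to be small
relative to `α`: `tan β ≤ 2β` and Jordan's inequality give `r α ≤ 2πβ (1 - r)`, hence
`1 / r ≥ 1 + (α / θ) K` when `β < δθ` with `δ = 1 / (2πK)`. Concavity of `u ↦ log (1 + u K)` on `[0, 1]` then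
gives `-log r ≥ (α / θ) log (1 + K)`, so `∠ 0 1 z^t ≤ θ / log (1 + K)`, which is `< εθ` once
`log (1 + K) > 1 / ε`.
-/

open Real EuclideanGeometry

lemma Real.tan_le_two_mul {x : ℝ} (h0 : 0 ≤ x) (h : x ≤ π / 3) : tan x ≤ 2 * x := by
  have hcos : 1 / 2 ≤ cos x := by
    rw [← cos_pi_div_three]
    exact cos_le_cos_of_nonneg_of_le_pi h0 (by linarith [pi_pos]) h
  rw [tan_eq_sin_div_cos, div_le_iff₀ (by linarith)]
  nlinarith [sin_le h0]

lemma Real.rpow_mul_neg_mul_log_le {r : ℝ} (hr : 0 < r) (t : ℝ) :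
    r ^ t * -(t * log r) ≤ 1 - r ^ t := by
  rw [rpow_def_of_pos hr]
  have h := add_one_le_exp (-(log r * t))
  have hinv : exp (log r * t) * exp (-(log r * t)) = 1 := by rw [← exp_add]; simp
  nlinarith [exp_pos (log r * t)]

lemma Real.mul_log_one_add_le_log_one_add_mul {u c : ℝ} (hu₀ : 0 ≤ u) (hu₁ : u ≤ 1)
    (hc : 0 ≤ c) : u * log (1 + c) ≤ log (1 + u * c) := by
  rw [← log_rpow (by linarith)]
  exact log_le_log (rpow_pos_of_pos (by linarith) _)
    (rpow_one_add_le_one_add_mul_self (by linarith) hu₀ hu₁)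

namespace Complex

lemma angle_zero_one_eq_abs_arg {w : ℂ} (hw : w ≠ 1) : ∠ (0 : ℂ) 1 w = |arg (1 - w)| := by
  change InnerProductGeometry.angle ((0 : ℂ) - 1) (w - 1) = _
  rw [show (0 : ℂ) - 1 = -1 * 1 by ring, show w - 1 = -1 * (1 - w) by ring,
    angle_mul_left (by norm_num), angle_one_left (sub_ne_zero.mpr hw.symm)]

lemma angle_zero_one_lt_pi_div_two_iff {w : ℂ} : ∠ (0 : ℂ) 1 w < π / 2 ↔ w.re < 1 := by
  rcases eq_or_ne w 1 with rfl | hw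
  · simp
  · rw [angle_zero_one_eq_abs_arg hw, abs_arg_lt_pi_div_two_iff]
    simp [sub_eq_zero, hw.symm]

lemma tan_angle_zero_one {w : ℂ} (hre : w.re < 1) (him : 0 ≤ w.im) :
    Real.tan (∠ (0 : ℂ) 1 w) = w.im / (1 - w.re) := by
  have hw : w ≠ 1 := by rintro rfl; simp at hre
  have harg : arg (1 - w) ≤ 0 := by
    rw [arg_of_re_nonneg (by simp; linarith), arcsin_nonpos]
    exact div_nonpos_of_nonpos_of_nonneg (by simpa using him) (norm_nonneg _)
  rw [angle_zero_one_eq_abs_arg hw, abs_of_nonpos harg, Real.tan_neg, tan_arg]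
  simp [neg_div]

lemma angle_zero_one_le_tan {w : ℂ} (hre : w.re < 1) (him : 0 ≤ w.im) :
    ∠ (0 : ℂ) 1 w ≤ w.im / (1 - w.re) :=
  tan_angle_zero_one hre him ▸
    le_tan (angle_nonneg _ _ _) (angle_zero_one_lt_pi_div_two_iff.mpr hre)

lemma im_le_two_mul_angle_zero_one {w : ℂ} (him : 0 ≤ w.im) (h : ∠ (0 : ℂ) 1 w ≤ π / 3) :
    w.im ≤ 2 * ∠ (0 : ℂ) 1 w * (1 - w.re) := by
  have hre : w.re < 1 := angle_zero_one_lt_pi_div_two_iff.mp (by linarith [pi_pos])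
  have := tan_angle_zero_one hre him ▸ tan_le_two_mul (angle_nonneg _ _ _) h
  rwa [div_le_iff₀ (by linarith)] at this

lemma cpow_ofReal_mul_exp {r α : ℝ} (hr : 0 < r) (hα₁ : -π < α) (hα₂ : α ≤ π) (t : ℝ) :
    ((r : ℂ) * exp (α * I)) ^ (t : ℂ) = ((r ^ t : ℝ) : ℂ) * exp ((t * α : ℝ) * I) := by
  rw [cpow_def_of_ne_zero (mul_ne_zero (by exact_mod_cast hr.ne') (exp_ne_zero _)),
    log_ofReal_mul hr (exp_ne_zero _), log_exp (by simpa using hα₁) (by simpa using hα₂),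
    rpow_def_of_pos hr, ofReal_exp, ← exp_add]
  push_cast
  ring_nf

lemma angle_zero_one_ofReal_mul_exp_le {ρ φ : ℝ} (hρ₀ : 0 ≤ ρ) (hρ₁ : ρ < 1) (hφ₀ : 0 ≤ φ)
    (hφπ : φ ≤ π) : ∠ (0 : ℂ) 1 (ρ * exp (φ * I)) ≤ ρ * φ / (1 - ρ) := by
  have hre : ((ρ : ℂ) * exp (φ * I)).re = ρ * Real.cos φ := by simp [exp_ofReal_mul_I_re]
  have him : ((ρ : ℂ) * exp (φ * I)).im = ρ * Real.sin φ := by simp [exp_ofReal_mul_I_im]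
  have hcos := Real.cos_le_one φ
  have hsin₀ := Real.sin_nonneg_of_nonneg_of_le_pi hφ₀ hφπ
  have hden : 1 - ρ ≤ 1 - ρ * Real.cos φ := by nlinarith
  refine (angle_zero_one_le_tan (by rw [hre]; nlinarith) (by rw [him]; positivity)).trans ?_
  rw [hre, him]
  calc ρ * Real.sin φ / (1 - ρ * Real.cos φ) ≤ ρ * φ / (1 - ρ * Real.cos φ) :=
        div_le_div_of_nonneg_right (by gcongr; exact Real.sin_le hφ₀) (by linarith)
    _ ≤ ρ * φ / (1 - ρ) := by gcongr

lemma angle_zero_one_cpow_le {r α t : ℝ} (hr₀ : 0 < r) (hr₁ : r < 1) (hα₀ : 0 ≤ α)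
    (hαπ : α ≤ π) (ht₀ : 0 < t) (ht₁ : t ≤ 1) :
    ∠ (0 : ℂ) 1 (((r : ℂ) * exp (α * I)) ^ (t : ℂ)) ≤ α / -Real.log r := by
  have hrt : r ^ t < 1 := Real.rpow_lt_one hr₀.le hr₁ ht₀
  have hlog : 0 < -Real.log r := neg_pos.mpr (Real.log_neg hr₀ hr₁)
  rw [cpow_ofReal_mul_exp hr₀ (by linarith [Real.pi_pos]) hαπ]
  refine (angle_zero_one_ofReal_mul_exp_le (by positivity) hrt (by positivity)
    (by nlinarith)).trans ?_
  rw [div_le_div_iff₀ (by linarith) hlog]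
  nlinarith [Real.rpow_mul_neg_mul_log_le hr₀ t]

lemma mul_le_two_pi_mul_angle_zero_one {r α : ℝ} (hr : 0 < r) (hα₀ : 0 < α) (hα : α ≤ π / 2)
    (hβ : ∠ (0 : ℂ) 1 (r * exp (α * I)) ≤ 1 / 10) :
    r * α ≤ 2 * π * ∠ (0 : ℂ) 1 (r * exp (α * I)) * (1 - r) := by
  set β := ∠ (0 : ℂ) 1 (r * exp (α * I))
  have hβ₀ : 0 ≤ β := angle_nonneg _ _ _
  have hsin : 2 * α ≤ π * Real.sin α := by
    have := Real.mul_le_sin hα₀.le hα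
    rw [div_mul_eq_mul_div, div_le_iff₀ Real.pi_pos] at this
    linarith
  have hsin₀ := Real.sin_pos_of_pos_of_lt_pi hα₀ (by linarith [Real.pi_pos])
  have him : r * Real.sin α ≤ 2 * β * (1 - r * Real.cos α) := by
    have h := im_le_two_mul_angle_zero_one (w := r * exp (α * I))
      (by simpa [exp_ofReal_mul_I_im] using by positivity)
      (by linarith [Real.pi_gt_three])
    simpa [exp_ofReal_mul_I_im, exp_ofReal_mul_I_re] using h
  have hcos : 1 - r * Real.cos α ≤ (1 - r) + r * (α ^ 2 / 2) := by
    nlinarith [Real.one_sub_sq_div_two_le_cos (x := α)]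
  have hβα : π * β * α ≤ 1 := by
    calc π * β * α ≤ π * (1 / 10) * (π / 2) := by gcongr
      _ ≤ 1 := by nlinarith [Real.pi_le_four, Real.pi_pos]
  have : 2 * (r * α) ≤ 2 * π * β * (1 - r) + r * α :=
    calc 2 * (r * α) ≤ π * (r * Real.sin α) := by
          linarith [mul_le_mul_of_nonneg_left hsin hr.le]
      _ ≤ π * (2 * β * ((1 - r) + r * (α ^ 2 / 2))) :=
          mul_le_mul_of_nonneg_left
            (him.trans (mul_le_mul_of_nonneg_left hcos (by linarith))) Real.pi_pos.le
      _ = 2 * π * β * (1 - r) + (π * β * α) * (r * α) := by ring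
      _ ≤ 2 * π * β * (1 - r) + r * α := by
          linarith [mul_le_of_le_one_left (by positivity : 0 ≤ r * α) hβα]
  linarith

lemma div_mul_log_one_add_le_neg_log {r α θ K : ℝ} (hr : 0 < r) (hα : 0 < α) (hαθ : α < θ)
    (hθπ : θ ≤ π / 2) (hK : 4 ≤ K) (hβ : 2 * π * K * ∠ (0 : ℂ) 1 (r * exp (α * I)) < θ) :
    α / θ * Real.log (1 + K) ≤ -Real.log r := by
  have hθ : 0 < θ := hα.trans hαθ
  have hβ₀ := angle_nonneg (0 : ℂ) 1 (r * exp (α * I))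
  have hβ₁ : ∠ (0 : ℂ) 1 (r * exp (α * I)) ≤ 1 / 10 := by
    have : 2 * π * 4 * ∠ (0 : ℂ) 1 (r * exp (α * I)) < π / 2 :=
      (by gcongr : _ ≤ 2 * π * K * ∠ (0 : ℂ) 1 (r * exp (α * I))).trans_lt (hβ.trans_le hθπ)
    nlinarith [Real.pi_pos]
  have hrα := mul_le_two_pi_mul_angle_zero_one hr hα (by linarith) hβ₁
  generalize ∠ (0 : ℂ) 1 (r * exp (α * I)) = β at hβ hβ₀ hrα
  have hrαK : r * α * K ≤ θ * (1 - r) := by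
    have hr₁ : 0 ≤ 1 - r :=
      (pos_of_mul_pos_right ((by positivity : 0 < r * α).trans_le hrα) (by positivity)).le
    calc r * α * K ≤ 2 * π * β * (1 - r) * K := by gcongr
      _ = 2 * π * K * β * (1 - r) := by ring
      _ ≤ θ * (1 - r) := by gcongr
  have h : r * (1 + α / θ * K) ≤ 1 := by
    rw [show r * (1 + α / θ * K) = (r * θ + r * α * K) / θ by field_simp, div_le_one hθ]
    linarith
  have := Real.log_nonpos (by positivity) h
  rw [Real.log_mul hr.ne' (by positivity)] at this
  calc α / θ * Real.log (1 + K) ≤ Real.log (1 + α / θ * K) :=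
        Real.mul_log_one_add_le_log_one_add_mul (by positivity)
          ((div_le_one hθ).mpr hαθ.le) (by linarith)
    _ ≤ -Real.log r := by linarith

end Complex

theorem stmt8 :
    ∀ ε > (0 : ℝ), ∃ δ > (0 : ℝ), ∀ θ : ℝ, 0 < θ → θ ≤ π / 2 →
      ∀ r : ℝ, 0 < r → ∀ α : ℝ, 0 < α → α < θ →
        ∀ z : ℂ, z = (r : ℂ) * Complex.exp (α * Complex.I) →
          α + EuclideanGeometry.angle (0 : ℂ) 1 z ≤ θ →
          EuclideanGeometry.angle (0 : ℂ) 1 z < δ * θ →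
          ∀ t : ℝ, 0 < t → t < 1 →
            EuclideanGeometry.angle (0 : ℂ) 1 (z ^ (t : ℂ)) < ε * θ := by
  intro ε hε
  set K := exp (1 / ε) + 4
  have hK₄ : 4 ≤ K := le_add_of_nonneg_left (exp_pos _).le
  have hK : 1 / ε < log (1 + K) := by
    rw [lt_log_iff_exp_lt (by positivity)]
    linarith
  refine ⟨1 / (2 * π * K), by positivity, ?_⟩
  intro θ hθ hθπ r hr α hα hαθ z hz _ hβ t ht ht₁
  rw [one_div_mul_eq_div, lt_div_iff₀ (by positivity), mul_comm] at hβ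
  have hlog := Complex.div_mul_log_one_add_le_neg_log hr hα hαθ hθπ hK₄ (hz ▸ hβ)
  have hr₁ : r < 1 := (log_neg_iff hr).mp <| by
    linarith [mul_pos (div_pos hα hθ) ((one_div_pos.mpr hε).trans hK)]
  calc ∠ (0 : ℂ) 1 (z ^ (t : ℂ)) ≤ α / -log r :=
        hz ▸ Complex.angle_zero_one_cpow_le hr hr₁ hα.le (by linarith) ht ht₁.le
    _ < ε * θ := by
        rw [div_lt_iff₀ (neg_pos.mpr (log_neg hr hr₁))]
        calc α = ε * θ * (α / θ * (1 / ε)) := by field_simp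
          _ < ε * θ * (α / θ * log (1 + K)) := by gcongr
          _ ≤ ε * θ * -log r := by gcongr
end

section
/- (Cesàro averaging preserves asymptotic invariance to one higher order.) Let F : 𝒰 → ℂ be holomorphic on an open set 𝒰 ⊂ ℂ^{ν+1}, and let h^{(0)}, h^{(1)}, …, h^{(k)} : D_ε → ℂ^{ν+1} be holomorphic curves that all have the same derivatives up to order m at λ = 0. Define ψ(λ) = (1/k)Σ_{i=0}^{k−1} h^{(i)}(λ) and φ(λ) = (1/k)Σ_{i=1}^{k} h^{(i)}(λ). Then (1/k)Σ_{i=0}^{k−1} F(h^{(i)}_1(λ), …, h^{(i)}_ν(λ), h^{(i+1)}_{ν+1}(λ)) = F(ψ_1(λ), …, ψ_ν(λ), φ_{ν+1}(λ)) + O(λ^{m+2}) as λ → 0. -/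
/-!
Let `g i` be the curve `h i` with its last coordinate replaced by that of `h (i + 1)`, and `q` the
average of the `g i`; `q` is the point `(ψ₁, …, ψ_ν, φ_{ν+1})` of the statement. Cauchy estimates on
complex lines give the uniform Taylor bound `F x - F y - F'(y) (x - y) = O(‖x - y‖²)` near a point
of `𝒰`. Applied to `x = g i`, `y = q` and averaged over `i`, the linear terms cancel because
`∑ i, (g i - q) = 0`, while `g i - q = O(λ^{m+1})`; hence the error is `O(λ^{2m+2})`.
-/

open Asymptotics Filter Finset Metric Set Topology

variable {E E' : Type*} [NormedAddCommGroup E] [NormedSpace ℂ E]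
  [NormedAddCommGroup E'] [NormedSpace ℂ E'] [CompleteSpace E']

/-- `f 1 - f 0 - f' 0` is the value at `1` of `dslope (dslope f 0) 0`; apply the Schwarz lemma
twice. -/
theorem norm_sub_sub_deriv_le_of_norm_le_on_ball {f : ℂ → E'} {R M : ℝ} (hR : 1 < R)
    (hf : DifferentiableOn ℂ f (ball 0 R)) (hM : ∀ z ∈ ball 0 R, ‖f z‖ ≤ M) :
    ‖f 1 - f 0 - deriv f 0‖ ≤ 4 * M / R ^ 2 := by
  have hR0 : 0 < R := one_pos.trans hR
  have h0 : (0 : ℂ) ∈ ball 0 R := mem_ball_self hR0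
  have h1 : (1 : ℂ) ∈ ball 0 R := by simpa using hR
  have hmaps : MapsTo f (ball 0 R) (closedBall (f 0) (2 * M)) := fun z hz => by
    rw [mem_closedBall]
    linarith [dist_le_norm_add_norm (f z) (f 0), hM z hz, hM 0 h0]
  have hslope : ∀ z ∈ ball (0 : ℂ) R, ‖dslope f 0 z‖ ≤ 2 * M / R := fun z hz =>
    Complex.norm_dslope_le_div_of_mapsTo_ball hf hmaps hz
  have hmaps' : MapsTo (dslope f 0) (ball 0 R) (closedBall (dslope f 0 0) (2 * (2 * M / R))) :=
    fun z hz => by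
      rw [mem_closedBall]
      linarith [dist_le_norm_add_norm (dslope f 0 z) (dslope f 0 0), hslope z hz, hslope 0 h0]
  have hd : DifferentiableOn ℂ (dslope f 0) (ball 0 R) :=
    (Complex.differentiableOn_dslope (ball_mem_nhds 0 hR0)).2 hf
  have key := Complex.norm_dslope_le_div_of_mapsTo_ball hd hmaps' h1
  rw [dslope_of_ne _ one_ne_zero, slope_def_module, dslope_of_ne _ one_ne_zero,
    slope_def_module, dslope_same] at key
  simp only [sub_zero, inv_one, one_smul] at key
  calc ‖f 1 - f 0 - deriv f 0‖ ≤ 2 * (2 * M / R) / R := key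
    _ = 4 * M / R ^ 2 := by ring

theorem norm_sub_sub_fderiv_le_of_norm_le_on_ball {F : E → E'} {z v : E} {ρ M : ℝ}
    (hF : DifferentiableOn ℂ F (ball z ρ)) (hM : ∀ x ∈ ball z ρ, ‖F x‖ ≤ M) (hv : ‖v‖ < ρ) :
    ‖F (z + v) - F z - fderiv ℂ F z v‖ ≤ 4 * M / ρ ^ 2 * ‖v‖ ^ 2 := by
  rcases eq_or_ne v 0 with rfl | hv0
  · simp
  have hvpos : 0 < ‖v‖ := norm_pos_iff.2 hv0
  have hline : ∀ t ∈ ball (0 : ℂ) (ρ / ‖v‖), z + t • v ∈ ball z ρ := fun t ht => by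
    rw [mem_ball_zero_iff, lt_div_iff₀ hvpos] at ht
    simpa [norm_smul] using ht
  have hFz : HasFDerivAt F (fderiv ℂ F z) z :=
    (hF.differentiableAt (ball_mem_nhds z (hvpos.trans hv))).hasFDerivAt
  have hderiv : HasDerivAt (fun t : ℂ => F (z + t • v)) (fderiv ℂ F z v) 0 :=
    hFz.comp_hasDerivAt_of_eq 0
      (by simpa using ((hasDerivAt_id (0 : ℂ)).smul_const v).const_add z) (by simp)
  have hdiff : DifferentiableOn ℂ (fun t : ℂ => F (z + t • v)) (ball 0 (ρ / ‖v‖)) :=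
    fun t ht => ((hF.differentiableAt (isOpen_ball.mem_nhds (hline t ht))).comp t
      ((differentiableAt_id.smul_const v).const_add z)).differentiableWithinAt
  have key := norm_sub_sub_deriv_le_of_norm_le_on_ball ((one_lt_div hvpos).2 hv) hdiff
    (fun t ht => hM _ (hline t ht))
  simp only [one_smul, zero_smul, add_zero, hderiv.deriv] at key
  calc _ ≤ 4 * M / (ρ / ‖v‖) ^ 2 := key
    _ = 4 * M / ρ ^ 2 * ‖v‖ ^ 2 := by field_simp

theorem DifferentiableOn.isBigO_sub_sub_fderiv {F : E → E'} {U : Set E}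
    (hF : DifferentiableOn ℂ F U) (hU : IsOpen U) {p : E} (hp : p ∈ U) :
    (fun y : E × E => F y.1 - F y.2 - fderiv ℂ F y.2 (y.1 - y.2)) =O[𝓝 (p, p)]
      fun y => ‖y.1 - y.2‖ ^ 2 := by
  have hbdd : ∀ᶠ x in 𝓝 p, x ∈ U ∧ ‖F x‖ < ‖F p‖ + 1 :=
    (hU.eventually_mem hp).and ((hF.continuousOn.continuousAt (hU.mem_nhds hp)).norm.eventually
      (gt_mem_nhds (lt_add_one _)))
  obtain ⟨r, hr, hrU⟩ := nhds_basis_ball.mem_iff.1 hbdd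
  refine IsBigO.of_bound (4 * (‖F p‖ + 1) / (r / 2) ^ 2) ?_
  filter_upwards [ball_mem_nhds (p, p) (by positivity : 0 < r / 4)] with y hy
  rw [mem_ball, Prod.dist_eq, max_lt_iff] at hy
  have hsub : ball y.2 (r / 2) ⊆ ball p r := fun x hx => by
    rw [mem_ball] at hx ⊢
    linarith [dist_triangle x y.2 p, hy.2]
  have hv : ‖y.1 - y.2‖ < r / 2 := by
    rw [← dist_eq_norm]
    linarith [dist_triangle_right y.1 y.2 p, hy.1, hy.2]
  have key := norm_sub_sub_fderiv_le_of_norm_le_on_ball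
    (hF.mono fun x hx => (hrU (hsub hx)).1) (fun x hx => (hrU (hsub hx)).2.le) hv
  rw [add_sub_cancel] at key
  simpa only [norm_pow, norm_norm] using key

theorem sum_sub_average_eq_zero {V : Type*} [AddCommGroup V] [Module ℂ V] {ι : Type*}
    {s : Finset ι} (hs : s.Nonempty) (v : ι → V) :
    ∑ i ∈ s, (v i - (#s : ℂ)⁻¹ • ∑ j ∈ s, v j) = 0 := by
  rw [sum_sub_distrib, sum_const, ← Nat.cast_smul_eq_nsmul ℂ,
    smul_inv_smul₀ (Nat.cast_ne_zero.2 hs.card_pos.ne'), sub_self]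

theorem isBigO_average_comp_sub_comp_average {α ι G : Type*} [SeminormedAddCommGroup G]
    {l : Filter α} {s : Finset ι} (hs : s.Nonempty) {F : E → E'} {U : Set E}
    (hF : DifferentiableOn ℂ F U) (hU : IsOpen U) {p : E} (hp : p ∈ U) {g : ι → α → E}
    (hg : ∀ i ∈ s, Tendsto (g i) l (𝓝 p)) {u : α → G}
    (hgu : ∀ i ∈ s, ∀ j ∈ s, (fun x => g i x - g j x) =O[l] u) :
    (fun x => (#s : ℂ)⁻¹ • ∑ i ∈ s, F (g i x) - F ((#s : ℂ)⁻¹ • ∑ i ∈ s, g i x)) =O[l]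
      fun x => ‖u x‖ ^ 2 := by
  set c : ℂ := (#s : ℂ)⁻¹
  have hc : (#s : ℂ) ≠ 0 := Nat.cast_ne_zero.2 hs.card_pos.ne'
  set q : α → E := fun x => c • ∑ i ∈ s, g i x
  have hq : Tendsto q l (𝓝 p) := by
    have := (tendsto_finsetSum s hg).const_smul c
    rwa [sum_const, ← Nat.cast_smul_eq_nsmul ℂ, inv_smul_smul₀ hc] at this
  have hdev : ∀ i ∈ s, (fun x => g i x - q x) =O[l] u := fun i hi =>
    ((IsBigO.sum fun j hj => hgu i hi j hj).const_smul_left c).congr_left fun x => by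
      rw [Pi.smul_apply, Finset.sum_apply, sum_sub_distrib, sum_const,
        ← Nat.cast_smul_eq_nsmul ℂ, smul_sub, inv_smul_smul₀ hc]
  have hrem : ∀ i ∈ s,
      (fun x => F (g i x) - F (q x) - fderiv ℂ F (q x) (g i x - q x)) =O[l] fun x => ‖u x‖ ^ 2 :=
    fun i hi => ((hF.isBigO_sub_sub_fderiv hU hp).comp_tendsto ((hg i hi).prodMk_nhds hq)).trans
      ((hdev i hi).norm_left.norm_right.pow 2)
  refine ((IsBigO.sum hrem).const_smul_left c).congr_left fun x => ?_
  rw [Pi.smul_apply, Finset.sum_apply, sum_sub_distrib, ← map_sum, sum_sub_average_eq_zero hs,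
    map_zero, sub_zero, sum_sub_distrib, sum_const, ← Nat.cast_smul_eq_nsmul ℂ, smul_sub,
    inv_smul_smul₀ hc]

theorem smul_sum_update {R ι κ M : Type*} [Semiring R] [AddCommMonoid M] [Module R M]
    [DecidableEq ι] (c : R) (s : Finset κ) (a b : κ → ι → M) (i₀ : ι) :
    c • ∑ j ∈ s, Function.update (a j) i₀ (b j i₀) =
      Function.update (c • ∑ j ∈ s, a j) i₀ ((c • ∑ j ∈ s, b j) i₀) := by
  ext i
  rcases eq_or_ne i i₀ with rfl | hi
  · simp [Finset.sum_apply]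
  · simp [Finset.sum_apply, Function.update_of_ne hi]

theorem Asymptotics.IsBigO.update_sub_update {α ι M G : Type*} [Fintype ι] [DecidableEq ι]
    [SeminormedAddCommGroup M] [SeminormedAddCommGroup G] {l : Filter α} {a a' b b' : α → ι → M}
    {u : α → G} (ha : (fun x => a x - a' x) =O[l] u) (hb : (fun x => b x - b' x) =O[l] u)
    (i₀ : ι) :
    (fun x => Function.update (a x) i₀ (b x i₀) - Function.update (a' x) i₀ (b' x i₀)) =O[l] u := by
  refine isBigO_pi.2 fun i => ?_
  rcases eq_or_ne i i₀ with rfl | hi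
  · simpa using isBigO_pi.1 hb i
  · simpa [Function.update_of_ne hi] using isBigO_pi.1 ha i

theorem isBigO_norm_pow_succ_sq (m : ℕ) :
    (fun z : ℂ => ‖z ^ (m + 1)‖ ^ 2) =O[𝓝 0] fun z => z ^ (m + 2) := by
  refine IsBigO.of_bound 1 ?_
  filter_upwards [closedBall_mem_nhds (0 : ℂ) one_pos] with z hz
  rw [mem_closedBall_zero_iff] at hz
  simp only [one_mul, norm_pow, norm_norm, ← pow_mul]
  exact pow_le_pow_of_le_one (norm_nonneg z) hz (by omega)

theorem stmt17 (ν m k : ℕ) (hk : 0 < k) (𝒰 : Set (Fin (ν + 1) → ℂ)) (h𝒰 : IsOpen 𝒰)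
    (F : (Fin (ν + 1) → ℂ) → ℂ) (hF : DifferentiableOn ℂ F 𝒰)
    (ε : ℝ) (hε : 0 < ε) (h : ℕ → ℂ → (Fin (ν + 1) → ℂ))
    (hdiff : ∀ i ≤ k, DifferentiableOn ℂ (h i) (Metric.ball 0 ε))
    (hmem : ∀ i ≤ k, ∀ l ∈ Metric.ball (0 : ℂ) ε, h i l ∈ 𝒰)
    (hjet : ∀ i ≤ k, ∀ j ≤ k,
      (fun l => h i l - h j l) =O[nhds 0] fun l : ℂ => l ^ (m + 1)) :
    (fun l : ℂ =>
        (1 / (k : ℂ)) * ∑ i ∈ Finset.range k,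
            F (Function.update (h i l) (Fin.last ν) (h (i + 1) l (Fin.last ν)))
          - F (Function.update ((1 / (k : ℂ)) • ∑ i ∈ Finset.range k, h i l) (Fin.last ν)
              (((1 / (k : ℂ)) • ∑ i ∈ Finset.range k, h (i + 1) l) (Fin.last ν))))
      =O[nhds 0] fun l : ℂ => l ^ (m + 2) := by
  have hval : ∀ i ≤ k, h i 0 = h 0 0 := fun i hi =>
    sub_eq_zero.1 ((hjet i hi 0 (Nat.zero_le k)).eq_zero_imp.self_of_nhds (by simp))
  have hcont : ∀ i ≤ k, Tendsto (h i) (𝓝 0) (𝓝 (h 0 0)) := fun i hi =>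
    hval i hi ▸ ((hdiff i hi).continuousOn.continuousAt (ball_mem_nhds 0 hε)).tendsto
  have hg : ∀ i ∈ range k, Tendsto (fun l => Function.update (h i l) (Fin.last ν)
      (h (i + 1) l (Fin.last ν))) (𝓝 0) (𝓝 (h 0 0)) := fun i hi => by
    rw [Finset.mem_range] at hi
    simpa using (hcont i hi.le).update (Fin.last ν) ((hcont (i + 1) hi).apply_nhds (Fin.last ν))
  have hgg : ∀ i ∈ range k, ∀ j ∈ range k, (fun l =>
      Function.update (h i l) (Fin.last ν) (h (i + 1) l (Fin.last ν)) -
        Function.update (h j l) (Fin.last ν) (h (j + 1) l (Fin.last ν))) =O[𝓝 0]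
      fun l => l ^ (m + 1) := fun i hi j hj => by
    rw [Finset.mem_range] at hi hj
    exact (hjet i hi.le j hj.le).update_sub_update (hjet (i + 1) hi (j + 1) hj) (Fin.last ν)
  refine ((isBigO_average_comp_sub_comp_average (nonempty_range_iff.2 hk.ne') hF h𝒰
    (hmem 0 (Nat.zero_le k) 0 (mem_ball_self hε)) hg hgg).trans
    (isBigO_norm_pow_succ_sq m)).congr_left fun l => ?_
  rw [card_range, smul_sum_update, smul_eq_mul, one_div]
end

section
/- Let f : (0, ∞) → (0, ∞) be given by f(x) = (b/2)·exp(−1/x^ℓ) with ℓ ≥ 1 and b = 2(eℓ)^{1/ℓ}, and let β = ℓ^{1/ℓ}. Then f(β) = β, f'(β) = 1, f''(β) < 0, and f restricted to [β, ∞) is a strictly increasing homeomorphism onto [β, b/2) with f(x) < x for all x > β; consequently f^k(x) → β as k → ∞ for every x ∈ [β, ∞), and the inverse branch U : [β, b/2) → [β, ∞) with U(β) = β satisfies U^k(x) → ∞ for every x ∈ (β, b/2). -/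
/-!
Writing `β ^ ℓ = ℓ` and `b / 2 = e^{1/ℓ} β`, the map is `f x = β exp ((1 - (β / x)^ℓ) / ℓ)`,
so `f x < x` for `x > β` is the inequality `1 - 1/t < log t` at `t = (x / β)^ℓ > 1`.
Hence on `[β, ∞)` the continuous increasing map `f` lies below the diagonal: forward orbits
decrease to its only fixed point `β`, while a backward orbit along the inverse branch increases,
and if it stayed below `b / 2` its limit would be a second fixed point.
-/

open Real Filter

open Set Topology

section Dynamics

variable {α : Type*} [ConditionallyCompleteLinearOrder α] [TopologicalSpace α] [OrderTopology α]

theorem tendsto_iterate_of_lt_self {f : α → α} {a x : α} (hmaps : MapsTo f (Ici a) (Ici a))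
    (hcont : ContinuousOn f (Ioi a)) (hfa : f a = a) (hlt : ∀ y, a < y → f y < y) (hx : a ≤ x) :
    Tendsto (fun n => f^[n] x) atTop (𝓝 a) := by
  have hmem : ∀ n, a ≤ f^[n] x := fun n => hmaps.iterate n hx
  have hanti : Antitone fun n => f^[n] x := by
    refine antitone_nat_of_succ_le fun n => ?_
    rw [Function.iterate_succ_apply']
    rcases (hmem n).eq_or_lt with h | h
    · rw [← h, hfa]
    · exact (hlt _ h).le
  have hlim := tendsto_atTop_ciInf hanti ⟨a, by rintro _ ⟨n, rfl⟩; exact hmem n⟩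
  suffices hL : ⨅ n, f^[n] x = a by rwa [hL] at hlim
  refine (le_ciInf hmem).eq_or_lt.elim Eq.symm fun haL => ?_
  have hfix := isFixedPt_of_tendsto_iterate hlim (hcont.continuousAt (Ioi_mem_nhds haL))
  exact absurd hfix (hlt _ haL).ne

theorem exists_le_iterate_of_rightInvOn {f U : α → α} {a c x : α} (hcont : ContinuousOn f (Ioi a))
    (hfa : f a = a) (hlt : ∀ y, a < y → f y < y)
    (hU : ∀ y ∈ Ico a c, f (U y) = y ∧ U y ∈ Ici a) (hx : x ∈ Ioo a c) :
    ∃ n, c ≤ U^[n] x := by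
  by_contra! hbdd
  have hstep : ∀ n, a < U^[n] x → f (U^[n + 1] x) = U^[n] x ∧ a < U^[n + 1] x := by
    intro n hn
    obtain ⟨hfU, hUa⟩ := hU _ ⟨hn.le, hbdd n⟩
    rw [Function.iterate_succ_apply']
    refine ⟨hfU, (mem_Ici.1 hUa).lt_of_ne fun h => ?_⟩
    rw [← h, hfa] at hfU
    exact hn.ne hfU
  have hmem : ∀ n, a < U^[n] x := by
    intro n
    induction n with
    | zero => exact hx.1
    | succ n ih => exact (hstep n ih).2
  have hf_succ : ∀ n, f (U^[n + 1] x) = U^[n] x := fun n => (hstep n (hmem n)).1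
  have hmono : Monotone fun n => U^[n] x := by
    refine monotone_nat_of_le_succ fun n => ?_
    rw [← hf_succ n]
    exact (hlt _ (hmem (n + 1))).le
  have hlim := tendsto_atTop_ciSup hmono ⟨c, by rintro _ ⟨n, rfl⟩; exact (hbdd n).le⟩
  set L := ⨆ n, U^[n] x
  have haL : a < L := (hmem 0).trans_le (le_ciSup ⟨c, by rintro _ ⟨n, rfl⟩; exact (hbdd n).le⟩ 0)
  have hfL : Tendsto (fun n => f (U^[n + 1] x)) atTop (𝓝 (f L)) :=
    (hcont.continuousAt (Ioi_mem_nhds haL)).tendsto.comp (hlim.comp (tendsto_add_atTop_nat 1))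
  simp only [hf_succ] at hfL
  exact (hlt L haL).ne (tendsto_nhds_unique hfL hlim)

variable [DenselyOrdered α] [NoMaxOrder α]

theorem bijOn_Ici_Ico_of_tendsto_atTop {δ : Type*} [LinearOrder δ] [TopologicalSpace δ]
    [OrderClosedTopology δ] {f : α → δ} {a : α} {c : δ} (hmono : StrictMonoOn f (Ici a))
    (hcont : ContinuousOn f (Ici a)) (hlim : Tendsto f atTop (𝓝 c)) :
    BijOn f (Ici a) (Ico (f a) c) := by
  refine ⟨fun x hx => ⟨hmono.monotoneOn self_mem_Ici hx hx, ?_⟩, hmono.injOn, fun y hy => ?_⟩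
  · obtain ⟨z, hxz⟩ := exists_gt x
    have hz : z ∈ Ici a := le_trans hx hxz.le
    refine (hmono hx hz hxz).trans_le (ge_of_tendsto hlim ?_)
    filter_upwards [eventually_ge_atTop z] with w hw
    exact hmono.monotoneOn hz (hz.trans hw) hw
  · obtain ⟨M, hyM, haM⟩ :=
      ((hlim.eventually_const_lt hy.2).and (eventually_ge_atTop a)).exists
    obtain ⟨x, hx, rfl⟩ :=
      intermediate_value_Icc haM (hcont.mono Icc_subset_Ici_self) ⟨hy.1, hyM.le⟩
    exact ⟨x, hx.1, rfl⟩

end Dynamics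

noncomputable def expNegInvRpow (c ℓ x : ℝ) : ℝ := c * exp (-1 / x ^ ℓ)

section ExpNegInvRpow

variable {c ℓ β : ℝ}

theorem hasDerivAt_expNegInvRpow {x : ℝ} (hx : 0 < x) :
    HasDerivAt (expNegInvRpow c ℓ) (expNegInvRpow c ℓ x * (ℓ * x ^ (-ℓ - 1))) x := by
  have hinv : HasDerivAt (fun y => -1 / y ^ ℓ) (ℓ * x ^ (-ℓ - 1)) x := by
    have h := (hasDerivAt_rpow_const (p := -ℓ) (Or.inl hx.ne')).neg
    rw [neg_mul, neg_neg] at h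
    refine h.congr_of_eventuallyEq ?_
    filter_upwards [Ioi_mem_nhds hx] with y hy
    show -1 / y ^ ℓ = -y ^ (-ℓ)
    rw [rpow_neg (le_of_lt hy), neg_div, one_div]
  exact (hinv.exp.const_mul c).congr_deriv (mul_assoc _ _ _).symm

theorem continuousOn_expNegInvRpow : ContinuousOn (expNegInvRpow c ℓ) (Ioi 0) :=
  fun _ hx => (hasDerivAt_expNegInvRpow hx).continuousAt.continuousWithinAt

theorem strictMonoOn_expNegInvRpow (hc : 0 < c) (hℓ : 0 < ℓ) :
    StrictMonoOn (expNegInvRpow c ℓ) (Ioi 0) := by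
  refine strictMonoOn_of_deriv_pos (convex_Ioi 0) continuousOn_expNegInvRpow fun x hx => ?_
  rw [interior_Ioi] at hx
  rw [(hasDerivAt_expNegInvRpow hx).deriv, expNegInvRpow]
  have := rpow_pos_of_pos (mem_Ioi.1 hx) (-ℓ - 1)
  positivity

theorem tendsto_expNegInvRpow_atTop (hℓ : 0 < ℓ) :
    Tendsto (expNegInvRpow c ℓ) atTop (𝓝 c) := by
  have h :=
    ((tendsto_const_nhds (x := (-1 : ℝ))).div_atTop (tendsto_rpow_atTop hℓ)).rexp.const_mul c
  rwa [exp_zero, mul_one] at h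

theorem expNegInvRpow_self (hβℓ : β ^ ℓ = ℓ) :
    expNegInvRpow (exp (1 / ℓ) * β) ℓ β = β := by
  rw [expNegInvRpow, hβℓ, mul_right_comm, ← exp_add, neg_div, add_neg_cancel, exp_zero, one_mul]

theorem expNegInvRpow_lt_self (hβ : 0 < β) (hβℓ : β ^ ℓ = ℓ) {x : ℝ} (hx : β < x) :
    expNegInvRpow (exp (1 / ℓ) * β) ℓ x < x := by
  have hℓ : 0 < ℓ := hβℓ ▸ rpow_pos_of_pos hβ ℓ
  have hxt : x ^ ℓ = ℓ * (x / β) ^ ℓ := by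
    rw [div_rpow (hβ.trans hx).le hβ.le, hβℓ, mul_div_cancel₀ _ hℓ.ne']
  set t := (x / β) ^ ℓ
  have ht : 1 < t := one_lt_rpow ((one_lt_div hβ).2 hx) hℓ
  have hlog : 1 - t⁻¹ < log t := by
    have := log_lt_sub_one_of_pos (inv_pos.2 (zero_lt_one.trans ht)) (inv_ne_one.2 ht.ne')
    rw [log_inv] at this
    linarith
  calc expNegInvRpow (exp (1 / ℓ) * β) ℓ x = β * exp ((1 - t⁻¹) / ℓ) := by
        rw [expNegInvRpow, hxt, mul_right_comm, mul_comm, ← exp_add]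
        congr 2
        field_simp
        ring
    _ < β * exp (log t / ℓ) := by gcongr
    _ = x := by
        rw [log_rpow (div_pos (hβ.trans hx) hβ), mul_div_cancel_left₀ _ hℓ.ne',
          exp_log (div_pos (hβ.trans hx) hβ), mul_div_cancel₀ _ hβ.ne']

theorem rpow_neg_sub_one_of_rpow_eq_self (hβ : 0 < β) (hβℓ : β ^ ℓ = ℓ) :
    β ^ (-ℓ - 1) = (ℓ * β)⁻¹ := by
  rw [rpow_sub_one hβ.ne', rpow_neg hβ.le, hβℓ, mul_inv, div_eq_mul_inv]

theorem deriv_expNegInvRpow_self (hβ : 0 < β) (hβℓ : β ^ ℓ = ℓ) :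
    deriv (expNegInvRpow (exp (1 / ℓ) * β) ℓ) β = 1 := by
  have hℓ : 0 < ℓ := hβℓ ▸ rpow_pos_of_pos hβ ℓ
  rw [(hasDerivAt_expNegInvRpow hβ).deriv, expNegInvRpow_self hβℓ,
    rpow_neg_sub_one_of_rpow_eq_self hβ hβℓ]
  field_simp

theorem iteratedDeriv_two_expNegInvRpow_self (hβ : 0 < β) (hβℓ : β ^ ℓ = ℓ) :
    iteratedDeriv 2 (expNegInvRpow (exp (1 / ℓ) * β) ℓ) β = -ℓ / β := by
  have hℓ : 0 < ℓ := hβℓ ▸ rpow_pos_of_pos hβ ℓ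
  set f := expNegInvRpow (exp (1 / ℓ) * β) ℓ
  have hderiv : deriv f =ᶠ[𝓝 β] fun x => f x * (ℓ * x ^ (-ℓ - 1)) := by
    filter_upwards [Ioi_mem_nhds hβ] with x hx
    exact (hasDerivAt_expNegInvRpow hx).deriv
  have h2 : HasDerivAt (fun x => f x * (ℓ * x ^ (-ℓ - 1))) _ β :=
    (hasDerivAt_expNegInvRpow hβ).fun_mul
      ((hasDerivAt_rpow_const (p := -ℓ - 1) (Or.inl hβ.ne')).const_mul ℓ)
  rw [iteratedDeriv_succ, iteratedDeriv_one, hderiv.deriv_eq, h2.deriv, expNegInvRpow_self hβℓ,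
    rpow_sub_one hβ.ne' (-ℓ - 1), rpow_neg_sub_one_of_rpow_eq_self hβ hβℓ]
  field_simp
  ring

end ExpNegInvRpow

theorem stmt18 (ℓ : ℝ) (hℓ : 1 ≤ ℓ) (b β : ℝ)
    (hb : b = 2 * (Real.exp 1 * ℓ) ^ (1 / ℓ)) (hβ : β = ℓ ^ (1 / ℓ))
    (f : ℝ → ℝ) (hf : f = fun x => b / 2 * Real.exp (-1 / x ^ ℓ)) :
    f β = β ∧ deriv f β = 1 ∧ iteratedDeriv 2 f β < 0 ∧
    StrictMonoOn f (Set.Ici β) ∧ Set.BijOn f (Set.Ici β) (Set.Ico β (b / 2)) ∧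
    (∀ x : ℝ, β < x → f x < x) ∧
    (∀ x ∈ Set.Ici β, Tendsto (fun n : ℕ => f^[n] x) atTop (nhds β)) ∧
    ∀ U : ℝ → ℝ, (∀ y ∈ Set.Ico β (b / 2), f (U y) = y ∧ U y ∈ Set.Ici β) →
      U β = β → ∀ x ∈ Set.Ioo β (b / 2), ∃ n : ℕ, b / 2 ≤ U^[n] x := by
  have hℓ0 : 0 < ℓ := zero_lt_one.trans_le hℓ
  have hβ0 : 0 < β := hβ ▸ rpow_pos_of_pos hℓ0 _
  have hβℓ : β ^ ℓ = ℓ := by rw [hβ, ← rpow_mul hℓ0.le, one_div_mul_cancel hℓ0.ne', rpow_one]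
  have hc : b / 2 = exp (1 / ℓ) * β := by
    rw [hb, hβ, mul_rpow (exp_pos 1).le hℓ0.le, exp_one_rpow]
    ring
  obtain rfl : f = expNegInvRpow (exp (1 / ℓ) * β) ℓ := by rw [hf, hc]; rfl
  rw [hc]
  have hfix := expNegInvRpow_self hβℓ
  have hlt := fun x => expNegInvRpow_lt_self hβ0 hβℓ (x := x)
  have hcont := continuousOn_expNegInvRpow (c := exp (1 / ℓ) * β) (ℓ := ℓ)
  have hcontIoi := hcont.mono (Ioi_subset_Ioi hβ0.le)
  have hmono := (strictMonoOn_expNegInvRpow (c := exp (1 / ℓ) * β) (by positivity) hℓ0).mono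
    (Ici_subset_Ioi.2 hβ0)
  have hbij := hfix ▸ bijOn_Ici_Ico_of_tendsto_atTop hmono (hcont.mono (Ici_subset_Ioi.2 hβ0))
    (tendsto_expNegInvRpow_atTop hℓ0)
  have hsecond := (iteratedDeriv_two_expNegInvRpow_self hβ0 hβℓ).trans_lt
    (div_neg_of_neg_of_pos (neg_neg_of_pos hℓ0) hβ0)
  exact ⟨hfix, deriv_expNegInvRpow_self hβ0 hβℓ, hsecond, hmono, hbij, hlt,
    fun x hx => tendsto_iterate_of_lt_self (hbij.mapsTo.mono_right Ico_subset_Ici_self)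
      hcontIoi hfix hlt hx,
    fun U hU _ x hx => exists_le_iterate_of_rightInvOn hcontIoi hfix hlt hU hx⟩
end

section
/- Let q ≥ 2 and let c₁, …, c_q ∈ ℝ be the critical orbit of g(z) = z² + c₁ with c_{n+1} = c_n² + c₁ for 1 ≤ n ≤ q−2, c_{q−1}² = −c₁ (so that 0 is periodic of period q). Then for every ρ ∈ ℂ, the identity 2(1 − ρ/2)·(1/c₁)·Σ_{n=1}^{q−1} ρ^{n−1}·c_n²/(gⁿ)'(c₁) = 1 + Σ_{n=1}^{q−1} ρⁿ/(gⁿ)'(c₁) holds, where (gⁿ)'(c₁) = Π_{k=1}^{n} 2c_k. -/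
open Finset

theorem stmt19 (q : ℕ) (hq : 2 ≤ q) (c : ℕ → ℝ)
    (hrec : ∀ n, 1 ≤ n → n ≤ q - 2 → c (n + 1) = c n ^ 2 + c 1)
    (hlast : c (q - 1) ^ 2 = -c 1)
    (hne : ∀ n, 1 ≤ n → n ≤ q - 1 → c n ≠ 0) :
    ∀ ρ : ℂ,
      2 * (1 - ρ / 2) * (1 / (c 1 : ℂ)) *
          ∑ n ∈ Finset.Icc 1 (q - 1),
            ρ ^ (n - 1) * (c n : ℂ) ^ 2 / ∏ k ∈ Finset.Icc 1 n, (2 * (c k : ℂ)) =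
        1 + ∑ n ∈ Finset.Icc 1 (q - 1), ρ ^ n / ∏ k ∈ Finset.Icc 1 n, (2 * (c k : ℂ)) := by
  intro ρ
  obtain ⟨N, rfl⟩ : ∃ N, q = N + 2 := ⟨q - 2, by omega⟩
  simp only [show N + 2 - 1 = N + 1 from rfl, show N + 2 - 2 = N from rfl] at *
  set P : ℕ → ℂ := fun m => ∏ k ∈ Finset.Icc 1 m, (2 * (c k : ℂ)) with hPdef
  have hcne : ∀ k, 1 ≤ k → k ≤ N + 1 → (c k : ℂ) ≠ 0 := fun k h1 h2 =>
    Complex.ofReal_ne_zero.mpr (hne k h1 h2)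
  have hPne : ∀ m, m ≤ N + 1 → P m ≠ 0 := by
    intro m hm
    refine Finset.prod_ne_zero_iff.mpr ?_
    intro k hk
    simp only [Finset.mem_Icc] at hk
    exact mul_ne_zero two_ne_zero (hcne k hk.1 (le_trans hk.2 hm))
  have hPsucc : ∀ m, P (m + 1) = P m * (2 * (c (m + 1) : ℂ)) := fun m =>
    Finset.prod_Icc_succ_top (Nat.one_le_iff_ne_zero.mpr (Nat.succ_ne_zero m)) _
  have hP0 : P 0 = 1 := by simp [hPdef]
  -- convert the Icc sums into range sums
  have hconv : ∀ f : ℕ → ℂ, ∑ n ∈ Finset.Icc 1 (N + 1), f n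
      = ∑ i ∈ Finset.range (N + 1), f (i + 1) := by
    intro f
    rw [← Finset.Ico_add_one_right_eq_Icc, Finset.sum_Ico_eq_sum_range]
    simp [add_comm 1]
  rw [hconv, hconv]
  set S : ℂ := ∑ i ∈ Finset.range (N + 1), ρ ^ i * (c (i + 1) : ℂ) ^ 2 / P (i + 1) with hSdef
  set T : ℂ := ∑ i ∈ Finset.range (N + 1), ρ ^ (i + 1) / P (i + 1) with hTdef
  have hgoalL : ∑ i ∈ Finset.range (N + 1),
      ρ ^ (i + 1 - 1) * (c (i + 1) : ℂ) ^ 2 / ∏ k ∈ Finset.Icc 1 (i + 1), (2 * (c k : ℂ)) = S := by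
    simp [hSdef, hPdef]
  rw [hgoalL]
  -- the key identity : (2 - ρ) * S = c 1 * (1 + T)
  have h2S : 2 * S = ∑ i ∈ Finset.range (N + 1), ρ ^ i * (c (i + 1) : ℂ) / P i := by
    rw [hSdef, Finset.mul_sum]
    refine Finset.sum_congr rfl fun i hi => ?_
    simp only [Finset.mem_range] at hi
    rw [hPsucc i]
    have h1 := hcne (i + 1) (Nat.le_add_left 1 i) (by omega)
    have h2 := hPne i (by omega)
    field_simp
  have hρS : ρ * S = (∑ i ∈ Finset.range (N + 1), ρ ^ i * (c (i + 1) : ℂ) / P i)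
      - c 1 - c 1 * T := by
    have step1 : ρ * S
        = ∑ i ∈ Finset.range (N + 1), ρ ^ (i + 1) * (c (i + 1) : ℂ) ^ 2 / P (i + 1) := by
      rw [hSdef, Finset.mul_sum]
      refine Finset.sum_congr rfl fun i _ => ?_
      rw [pow_succ]
      ring
    have hbody : ∀ i ∈ Finset.range N,
        ρ ^ (i + 1) * (c (i + 1) : ℂ) ^ 2 / P (i + 1)
          = ρ ^ (i + 1) * (c (i + 2) : ℂ) / P (i + 1)
            - (c 1 : ℂ) * (ρ ^ (i + 1) / P (i + 1)) := by
      intro i hi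
      simp only [Finset.mem_range] at hi
      have h := hrec (i + 1) (Nat.le_add_left 1 i) (by omega)
      have hc : ((c (i + 1) : ℂ)) ^ 2 = (c (i + 2) : ℂ) - (c 1 : ℂ) := by
        have : c (i + 2) = c (i + 1) ^ 2 + c 1 := h
        push_cast [this]
        ring
      rw [hc]
      ring
    have hlastC : ((c (N + 1) : ℂ)) ^ 2 = -(c 1 : ℂ) := by exact_mod_cast hlast
    have hshift : ∑ i ∈ Finset.range N, ρ ^ (i + 1) * (c (i + 2) : ℂ) / P (i + 1)
        = (∑ i ∈ Finset.range (N + 1), ρ ^ i * (c (i + 1) : ℂ) / P i) - c 1 := by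
      rw [Finset.sum_range_succ' (fun i => ρ ^ i * (c (i + 1) : ℂ) / P i) N]
      simp [hP0]
    have hTsplit : ∑ i ∈ Finset.range N, ρ ^ (i + 1) / P (i + 1)
        = T - ρ ^ (N + 1) / P (N + 1) := by
      rw [hTdef, Finset.sum_range_succ]
      ring
    rw [step1, Finset.sum_range_succ, Finset.sum_congr rfl hbody, Finset.sum_sub_distrib,
      ← Finset.mul_sum, hshift, hTsplit, hlastC]
    ring
  have hc1 : (c 1 : ℂ) ≠ 0 := hcne 1 le_rfl (by omega)
  have key : (2 - ρ) * S = (c 1 : ℂ) * (1 + T) := by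
    have : (2 - ρ) * S = 2 * S - ρ * S := by ring
    rw [this, h2S, hρS]
    ring
  field_simp
  linear_combination key
end
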